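/- Let T be a rooted phylogenetic X-tree and L a minimal topological lasso for T such that Γ(L) is a block graph. Then for every interior vertex v of T there exists a unique block B of Γ(L) with v = lca_T(V(B)); consequently the map v ↦ B_v is a bijection between the interior vertices of T and the blocks of Γ(L), with inverse B ↦ lca_T(V(B)). -/

import Mathlib

open scoped Classical

/-- A rooted `X`-tree on vertex type `V`: a finite rooted tree encoded by a parent
function, whose leaves (the vertices with no children) are bijectively labelled by `X`. -/
structure XTree (X V : Type) where
  root : V
  parent : V → V
  parent_root : parent root = root
  reaches : ∀ v : V, ∃ n : ℕ, parent^[n] v = root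
  leaf : X → V
  leaf_inj : Function.Injective leaf
  leaf_iff : ∀ v : V, (∀ w : V, parent w = v → w = v) ↔ v ∈ Set.range leaf

namespace XTree

variable {X V : Type}

/-- The children of a vertex. -/
def children (T : XTree X V) (v : V) : Set V := {w | T.parent w = v ∧ w ≠ v}

def IsLeaf (T : XTree X V) (v : V) : Prop := v ∈ Set.range T.leaf

def Interior (T : XTree X V) (v : V) : Prop := ¬ T.IsLeaf v

/-- Phylogenetic: root has at least two children, and no non-root vertex has exactly
one child (no degree-two vertices apart from possibly the root). -/
def IsPhylo (T : XTree X V) : Prop :=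
  2 ≤ (T.children T.root).ncard ∧
    ∀ v : V, v ≠ T.root → T.Interior v → 2 ≤ (T.children v).ncard

/-- `T.Desc v w` : `w` is a descendant of `v` (or equal to `v`). -/
def Desc (T : XTree X V) (v w : V) : Prop := ∃ n : ℕ, T.parent^[n] w = v

/-- The set of leaf labels below a vertex. -/
def leafSet (T : XTree X V) (v : V) : Set X := {x | T.Desc v (T.leaf x)}

/-- `v` is the last common ancestor of the set `S` of vertices. -/
def IsLCA (T : XTree X V) (v : V) (S : Set V) : Prop :=
  (∀ w ∈ S, T.Desc v w) ∧ ∀ u : V, (∀ w ∈ S, T.Desc u w) → T.Desc u v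

/-- Not a star tree: some interior vertex other than the root. -/
def NonDegenerate (T : XTree X V) : Prop := ∃ v : V, T.Interior v ∧ v ≠ T.root

end XTree

/-- A cord: a 2-element subset of `X`. -/
def IsCord {X : Type} (c : Set X) : Prop := ∃ a b : X, a ≠ b ∧ c = {a, b}

/-- The graph `Γ(L)` with vertex set `X` and edge set `L`. -/
def cordGraph {X : Type} (L : Set (Set X)) : SimpleGraph X where
  Adj a b := a ≠ b ∧ ({a, b} : Set X) ∈ L
  symm := by
    constructor
    intro a b h
    exact ⟨Ne.symm h.1, by rw [Set.pair_comm]; exact h.2⟩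
  loopless := by constructor; intro a h; exact h.1 rfl

/-- Topological lasso, via the child-edge graph characterization: for every interior
vertex, any two distinct child subtrees are joined by a cord of `L`. -/
def XTree.IsTopoLasso {X V : Type} (T : XTree X V) (L : Set (Set X)) : Prop :=
  ∀ v c₁ c₂ : V, c₁ ∈ T.children v → c₂ ∈ T.children v → c₁ ≠ c₂ →
    ∃ a b : X, a ∈ T.leafSet c₁ ∧ b ∈ T.leafSet c₂ ∧ ({a, b} : Set X) ∈ L

/-- Set-inclusion minimal topological lasso. -/
def XTree.IsMinTopoLasso {X V : Type} (T : XTree X V) (L : Set (Set X)) : Prop :=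
  T.IsTopoLasso L ∧ ∀ L' ⊆ L, T.IsTopoLasso L' → L' = L

/-- A nonempty vertex set inducing a connected subgraph with no cut vertex. -/
def GoodSet {α : Type} (G : SimpleGraph α) (B : Set α) : Prop :=
  B.Nonempty ∧ (G.induce B).Connected ∧
    ∀ v ∈ B, (B \ {v}).Nonempty → (G.induce (B \ {v})).Connected

/-- A block: a maximal connected induced subgraph without a cut vertex. -/
def IsBlock {α : Type} (G : SimpleGraph α) (B : Set α) : Prop :=
  GoodSet G B ∧ ∀ C : Set α, GoodSet G C → B ⊆ C → B = C

/-- A block graph: every block is a clique. -/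
def IsBlockGraph {α : Type} (G : SimpleGraph α) : Prop :=
  ∀ B : Set α, IsBlock G B → G.IsClique B

/-- A cut vertex: deleting it disconnects the graph. -/
def IsCutVtx {α : Type} (G : SimpleGraph α) (v : α) : Prop :=
  ¬ (G.induce {w | w ≠ v}).Connected

/-- Claw-free: no induced `K_{1,3}`. -/
def ClawFree {α : Type} (G : SimpleGraph α) : Prop :=
  ¬ ∃ v a b c : α, a ≠ b ∧ a ≠ c ∧ b ≠ c ∧
    G.Adj v a ∧ G.Adj v b ∧ G.Adj v c ∧ ¬ G.Adj a b ∧ ¬ G.Adj a c ∧ ¬ G.Adj b c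

/-- The child-edge graph `G(L,v)`: vertices are the children of `v` (equivalently
the child edges of `v`), two of them adjacent if a cord of `L` joins their subtrees. -/
def childGraph {X V : Type} (T : XTree X V) (L : Set (Set X)) (v : V) :
    SimpleGraph {c : V // c ∈ T.children v} where
  Adj c₁ c₂ := c₁ ≠ c₂ ∧ ∃ a b : X,
    a ∈ T.leafSet (c₁ : V) ∧ b ∈ T.leafSet (c₂ : V) ∧ ({a, b} : Set X) ∈ L
  symm := by
    constructor
    rintro c₁ c₂ ⟨h, a, b, ha, hb, hm⟩
    exact ⟨Ne.symm h, b, a, hb, ha, by rw [Set.pair_comm]; exact hm⟩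
  loopless := by constructor; rintro c ⟨h, -⟩; exact h rfl

/-- `cl(T)`: the clusters of non-root interior vertices. -/
def clSet {X V : Type} (T : XTree X V) : Set (Set X) :=
  {A | ∃ v : V, v ≠ T.root ∧ T.Interior v ∧ A = T.leafSet v}

/-- A cluster marker map for `T` and the ordering of `X`:
`f A` is the `σ`-least element of `A` not used as marker of a proper subcluster. -/
def IsClusterMarker {X V : Type} [LinearOrder X] (T : XTree X V) (f : Set X → X) : Prop :=
  ∀ A ∈ clSet T,
    ((∃ B ∈ clSet T, B ⊂ A) →
      IsLeast (A \ {y | ∃ B ∈ clSet T, B ⊂ A ∧ f B = y}) (f A)) ∧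
    ((¬ ∃ B ∈ clSet T, B ⊂ A) → IsLeast A (f A))

/-- The marker of a child `c` of an interior vertex: the label of `c` if `c` is a leaf,
and `f (L(c))` if `c` is interior. -/
def markRel {X V : Type} (T : XTree X V) (f : Set X → X) (c : V) (a : X) : Prop :=
  T.leaf a = c ∨ (T.Interior c ∧ a = f (T.leafSet c))

/-- `L_{(T,f)}(v)`: all cords between markers of distinct children of `v`. -/
def lassoAt {X V : Type} (T : XTree X V) (f : Set X → X) (v : V) : Set (Set X) :=
  {c | ∃ c₁ c₂ : V, c₁ ∈ T.children v ∧ c₂ ∈ T.children v ∧ c₁ ≠ c₂ ∧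
    ∃ a b : X, markRel T f c₁ a ∧ markRel T f c₂ b ∧ c = {a, b}}

/-- `L_{(T,f)}`: the union over all interior vertices of `L_{(T,f)}(v)`. -/
def lassoFull {X V : Type} (T : XTree X V) (f : Set X → X) : Set (Set X) :=
  {c | ∃ v : V, T.Interior v ∧ c ∈ lassoAt T f v}

/-- An equidistant proper edge-weighting of `T`, encoded by the height function
`t v` = distance from `v` to any leaf below it (so all leaves are equidistant
from the root); properness: interior edges have positive weight. -/
def EquidistantProper {X V : Type} (T : XTree X V) (t : V → ℝ) : Prop :=
  (∀ x : X, t (T.leaf x) = 0) ∧ (∀ v : V, t v ≤ t (T.parent v)) ∧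
    ∀ v : V, v ≠ T.root → T.Interior v → t v < t (T.parent v)

/-- Equivalence of two `X`-trees: a root-, parent- and labelling-preserving bijection. -/
def TreeEquiv {X V V' : Type} (T : XTree X V) (T' : XTree X V') : Prop :=
  ∃ φ : V ≃ V', φ T.root = T'.root ∧ (∀ v, φ (T.parent v) = T'.parent (φ v)) ∧
    ∀ x, φ (T.leaf x) = T'.leaf x

/-- `S` is (equivalent to) the restriction `T|_Y`: the clusters of `S` are exactly the
nonempty traces on `Y` of the clusters of `T`. -/
def IsRestriction {X : Type} (Y : Set X) {V W : Type}
    (T : XTree X V) (S : XTree (↥Y) W) : Prop :=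
  ∀ A : Set X, A ⊆ Y →
    ((∃ w : W, A = Subtype.val '' S.leafSet w) ↔ (A.Nonempty ∧ ∃ v : V, A = T.leafSet v ∩ Y))

/-- The restriction `L|_Y` of a set of cords of `X` to cords of `Y`. -/
def restrictLasso {X : Type} (Y : Set X) (L : Set (Set X)) : Set (Set ↥Y) :=
  {c | ∃ a b : ↥Y, a ≠ b ∧ c = {a, b} ∧ ({(a : X), (b : X)} : Set X) ∈ L}

/-!
In a minimal topological lasso every two sibling subtrees are joined by exactly one cord, since a
second one could be dropped. For an interior vertex `v` let `B_v` be the set of ends of the cords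
between the child subtrees of `v`. If two such cords left one child subtree from different
leaves, they would close a cycle in `Γ(L)` through a third subtree; as `Γ(L)` is a block graph,
the block of that cycle is a clique and yields a second cord between two sibling subtrees. Hence
`B_v` is a clique. A common neighbour of two leaves separated by `v` lies below `v` (otherwise
both cords would join the same two subtrees at a higher vertex), so a block containing two leaves
separated by `v` lies below `v`, hence inside `B_v`, and by maximality equals `B_v`. Every block
has two vertices, as `Γ(L)` has no isolated vertex, and two distinct leaves are separated by
their last common ancestor; so `v ↦ B_v` and `B ↦ lca_T(B)` are mutually inverse.
-/

namespace XTree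

variable {X V : Type} {T : XTree X V}

theorem desc_refl (v : V) : T.Desc v v := ⟨0, rfl⟩

theorem Desc.trans {u v w : V} (h₁ : T.Desc u v) (h₂ : T.Desc v w) : T.Desc u w := by
  obtain ⟨m, rfl⟩ := h₁
  obtain ⟨n, rfl⟩ := h₂
  exact ⟨m + n, Function.iterate_add_apply _ _ _ _⟩

theorem eq_root_of_isPeriodicPt {v : V} {m : ℕ} (hm : 0 < m)
    (h : Function.IsPeriodicPt T.parent m v) : v = T.root := by
  obtain ⟨n, hn⟩ := T.reaches v
  have hle : n ≤ n * m := Nat.le_mul_of_pos_right n hm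
  calc v = T.parent^[n * m] v := (h.const_mul n).eq.symm
    _ = T.parent^[n * m - n] (T.parent^[n] v) := by
      rw [← Function.iterate_add_apply, Nat.sub_add_cancel hle]
    _ = T.root := by rw [hn, Function.iterate_fixed T.parent_root]

theorem Desc.antisymm {u v : V} (h₁ : T.Desc u v) (h₂ : T.Desc v u) : u = v := by
  obtain ⟨m, rfl⟩ := h₁
  obtain ⟨n, hn⟩ := h₂
  rcases Nat.eq_zero_or_pos m with rfl | hm
  · rfl
  · have hv : Function.IsPeriodicPt T.parent (n + m) v := by
      rw [Function.IsPeriodicPt, Function.IsFixedPt, Function.iterate_add_apply, hn]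
    rw [eq_root_of_isPeriodicPt (by omega) hv, Function.iterate_fixed T.parent_root]

theorem Desc.total {u u' w : V} (h : T.Desc u w) (h' : T.Desc u' w) :
    T.Desc u u' ∨ T.Desc u' u := by
  obtain ⟨i, rfl⟩ := h
  obtain ⟨j, rfl⟩ := h'
  rcases Nat.le_total i j with hij | hji
  · exact Or.inr ⟨j - i, by rw [← Function.iterate_add_apply, Nat.sub_add_cancel hij]⟩
  · exact Or.inl ⟨i - j, by rw [← Function.iterate_add_apply, Nat.sub_add_cancel hji]⟩

theorem eq_leaf_of_desc {x : X} {w : V} (h : T.Desc (T.leaf x) w) : w = T.leaf x := by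
  have hleaf := (T.leaf_iff (T.leaf x)).mpr ⟨x, rfl⟩
  obtain ⟨n, hn⟩ := h
  induction n generalizing w with
  | zero => exact hn
  | succ k ih => exact hleaf w (ih (Function.iterate_succ_apply _ _ _ ▸ hn))

theorem leafSet_leaf (x : X) : T.leafSet (T.leaf x) = {x} :=
  Set.eq_singleton_iff_unique_mem.mpr
    ⟨desc_refl _, fun _ hy => T.leaf_inj (eq_leaf_of_desc hy)⟩

theorem leafSet_anti {u v : V} (h : T.Desc u v) : T.leafSet v ⊆ T.leafSet u :=
  fun _ hx => h.trans hx

theorem desc_of_mem_children {v c : V} (hc : c ∈ T.children v) : T.Desc v c :=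
  ⟨1, hc.1⟩

theorem leafSet_subset_of_mem_children {v c : V} (hc : c ∈ T.children v) :
    T.leafSet c ⊆ T.leafSet v :=
  leafSet_anti (desc_of_mem_children hc)

theorem interior_of_mem_children {v c : V} (hc : c ∈ T.children v) : T.Interior v :=
  fun hleaf => hc.2 ((T.leaf_iff v).mpr hleaf c hc.1)

theorem exists_mem_children {v : V} (hv : T.Interior v) : ∃ c, c ∈ T.children v := by
  by_contra! h
  exact hv ((T.leaf_iff v).mp fun w hw => by_contra fun hne => h w ⟨hw, hne⟩)

theorem exists_mem_children_desc {v w : V} (h : T.Desc v w) (hne : w ≠ v) :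
    ∃ c ∈ T.children v, T.Desc c w := by
  have hex : ∃ n, T.parent^[n] w = v := h
  have hpos : Nat.find hex ≠ 0 := fun h0 => hne (by simpa [h0] using Nat.find_spec hex)
  obtain ⟨k, hk⟩ := Nat.exists_eq_succ_of_ne_zero hpos
  refine ⟨T.parent^[k] w, ⟨?_, fun hkv => ?_⟩, ⟨k, rfl⟩⟩
  · rw [← Function.iterate_succ_apply' T.parent, ← hk]
    exact Nat.find_spec hex
  · exact Nat.find_min hex (by omega) hkv

theorem exists_mem_children_mem_leafSet {v : V} (hv : T.Interior v) {x : X}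
    (hx : x ∈ T.leafSet v) : ∃ c ∈ T.children v, x ∈ T.leafSet c :=
  exists_mem_children_desc hx fun h => hv ⟨x, h⟩

theorem eq_of_mem_children_of_desc {v c c' w : V} (hc : c ∈ T.children v)
    (hc' : c' ∈ T.children v) (h : T.Desc c w) (h' : T.Desc c' w) : c = c' := by
  have key : ∀ d ∈ T.children v, ∀ d' ∈ T.children v, T.Desc d' d → d = d' := by
    rintro d hd d' hd' ⟨_ | k, hk⟩
    · exact hk
    · rw [Function.iterate_succ_apply, hd.1] at hk
      exact absurd (Desc.antisymm ⟨k, hk⟩ (desc_of_mem_children hd')) hd'.2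
  rcases h.total h' with h₁ | h₁
  · exact (key c' hc' c hc h₁).symm
  · exact key c hc c' hc' h₁

theorem ne_of_mem_leafSet {v c c' : V} (hc : c ∈ T.children v) (hc' : c' ∈ T.children v)
    (hne : c ≠ c') {a b : X} (ha : a ∈ T.leafSet c) (hb : b ∈ T.leafSet c') : a ≠ b := by
  rintro rfl
  exact hne (eq_of_mem_children_of_desc hc hc' ha hb)

variable (T) in
theorem wellFounded_strictDesc [Finite V] : WellFounded fun w v => T.Desc v w ∧ w ≠ v := by
  have : IsTrans V fun w v => T.Desc v w ∧ w ≠ v :=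
    ⟨fun _ _ _ h₁ h₂ => ⟨h₂.1.trans h₁.1, fun h => h₁.2 (h₁.1.antisymm (h ▸ h₂.1)).symm⟩⟩
  have : Std.Irrefl fun w v => T.Desc v w ∧ w ≠ v := ⟨fun _ h => h.2 rfl⟩
  exact Finite.wellFounded_of_trans_of_irrefl _

variable (T) in
theorem induction_children [Finite V] {P : V → Prop}
    (h : ∀ v, (∀ c ∈ T.children v, P c) → P v) (v : V) : P v :=
  (T.wellFounded_strictDesc).induction v fun v ih =>
    h v fun c hc => ih c ⟨desc_of_mem_children hc, hc.2⟩

theorem IsPhylo.exists_ne_mem_children [Finite V] (hph : T.IsPhylo) {v : V}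
    (hv : T.Interior v) : ∃ c ∈ T.children v, ∃ c' ∈ T.children v, c ≠ c' := by
  have h₂ : 1 < (T.children v).ncard := by
    by_cases hr : v = T.root
    · exact hr ▸ hph.1
    · exact hph.2 v hr hv
  simpa using (Set.one_lt_ncard_iff).mp h₂

theorem IsLCA.unique {v v' : V} {S : Set V} (h : T.IsLCA v S) (h' : T.IsLCA v' S) : v = v' :=
  (h'.2 v h.1).antisymm (h.2 v' h'.1)

variable (T) in
theorem exists_isLCA_pair (w₁ w₂ : V) : ∃ u, T.IsLCA u {w₁, w₂} := by
  have hex : ∃ n, T.Desc (T.parent^[n] w₁) w₂ := by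
    obtain ⟨k, hk⟩ := T.reaches w₁
    exact ⟨k, hk ▸ T.reaches w₂⟩
  refine ⟨T.parent^[Nat.find hex] w₁, ?_, fun u hu => ?_⟩
  · rintro w (rfl | rfl)
    exacts [⟨_, rfl⟩, Nat.find_spec hex]
  · obtain ⟨i, hi⟩ := hu w₁ (by simp)
    have hmin : Nat.find hex ≤ i := Nat.find_min' hex (hi ▸ hu w₂ (by simp))
    exact ⟨i - Nat.find hex, by rw [← Function.iterate_add_apply, Nat.sub_add_cancel hmin, hi]⟩

/-- `a ≠ b` and `v = lca_T {a, b}`. -/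
def Separates (T : XTree X V) (v : V) (a b : X) : Prop :=
  ∃ c ∈ T.children v, ∃ c' ∈ T.children v, c ≠ c' ∧ a ∈ T.leafSet c ∧ b ∈ T.leafSet c'

namespace Separates

variable {v : V} {a b : X}

theorem symm (h : T.Separates v a b) : T.Separates v b a :=
  let ⟨c, hc, c', hc', hne, ha, hb⟩ := h
  ⟨c', hc', c, hc, hne.symm, hb, ha⟩

theorem ne (h : T.Separates v a b) : a ≠ b :=
  let ⟨_, hc, _, hc', hne, ha, hb⟩ := h
  ne_of_mem_leafSet hc hc' hne ha hb

theorem interior (h : T.Separates v a b) : T.Interior v :=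
  let ⟨_, hc, _⟩ := h
  interior_of_mem_children hc

theorem mem_leafSet (h : T.Separates v a b) : a ∈ T.leafSet v :=
  let ⟨_, hc, _, _, _, ha, _⟩ := h
  leafSet_subset_of_mem_children hc ha

theorem desc_of_desc (h : T.Separates v a b) {u : V} (ha : T.Desc u (T.leaf a))
    (hb : T.Desc u (T.leaf b)) : T.Desc u v := by
  obtain ⟨c, hc, c', hc', hne, hac, hbc'⟩ := h
  rcases ha.total (desc_of_mem_children hc |>.trans hac) with huv | hvu
  · exact huv
  · by_cases huv : u = v
    · exact huv ▸ desc_refl u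
    · obtain ⟨d, hd, hdu⟩ := exists_mem_children_desc hvu huv
      exact absurd ((eq_of_mem_children_of_desc hd hc (hdu.trans ha) hac).symm.trans
        (eq_of_mem_children_of_desc hd hc' (hdu.trans hb) hbc')) hne

theorem unique {w : V} (hv : T.Separates v a b) (hw : T.Separates w a b) : v = w :=
  (hw.desc_of_desc hv.mem_leafSet hv.symm.mem_leafSet).antisymm
    (hv.desc_of_desc hw.mem_leafSet hw.symm.mem_leafSet)

theorem isLCA {B : Set X} (h : T.Separates v a b) (ha : a ∈ B) (hb : b ∈ B)
    (hB : B ⊆ T.leafSet v) : T.IsLCA v (T.leaf '' B) :=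
  ⟨by rintro _ ⟨x, hx, rfl⟩; exact hB hx,
    fun _ hu => h.desc_of_desc (hu _ ⟨a, ha, rfl⟩) (hu _ ⟨b, hb, rfl⟩)⟩

theorem left_or_right {x : X} (h : T.Separates v a b) (hx : x ∈ T.leafSet v) :
    T.Separates v x a ∨ T.Separates v x b := by
  obtain ⟨c, hc, c', hc', hne, ha, hb⟩ := h
  obtain ⟨d, hd, hxd⟩ := exists_mem_children_mem_leafSet (interior_of_mem_children hc) hx
  by_cases hdc : d = c
  · exact Or.inr ⟨d, hd, c', hc', hdc ▸ hne, hxd, hb⟩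
  · exact Or.inl ⟨d, hd, c, hc, hdc, hxd, ha⟩

end Separates

variable (T) in
theorem exists_separates {a b : X} (hab : a ≠ b) : ∃ v, T.Separates v a b := by
  obtain ⟨u, hu⟩ := T.exists_isLCA_pair (T.leaf a) (T.leaf b)
  have hua : T.Desc u (T.leaf a) := hu.1 _ (by simp)
  have hub : T.Desc u (T.leaf b) := hu.1 _ (by simp)
  have hleaf : ∀ {x y : X}, x ≠ y → T.Desc u (T.leaf y) → T.leaf x ≠ u := by
    rintro x y hxy hy rfl
    exact hxy (T.leaf_inj (eq_leaf_of_desc hy)).symm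
  obtain ⟨c, hc, hca⟩ := exists_mem_children_desc hua (hleaf hab hub)
  obtain ⟨c', hc', hcb⟩ := exists_mem_children_desc hub (hleaf hab.symm hua)
  refine ⟨u, c, hc, c', hc', ?_, hca, hcb⟩
  rintro rfl
  have hcu : T.Desc c u := hu.2 c (by rintro w (rfl | rfl) <;> assumption)
  exact hc.2 (hcu.antisymm (desc_of_mem_children hc))

theorem IsLCA.exists_separates {v : V} {B : Set X} (h : T.IsLCA v (T.leaf '' B))
    (hv : T.Interior v) (hB : B.Nonempty) : ∃ a ∈ B, ∃ b ∈ B, T.Separates v a b := by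
  obtain ⟨a, ha⟩ := hB
  have hmem : ∀ x ∈ B, x ∈ T.leafSet v := fun x hx => h.1 _ ⟨x, hx, rfl⟩
  obtain ⟨c, hc, hac⟩ := exists_mem_children_mem_leafSet hv (hmem a ha)
  obtain ⟨b, hb, hbc⟩ : ∃ b ∈ B, b ∉ T.leafSet c := by
    by_contra! hall
    have hcv : T.Desc c v := h.2 c (by rintro _ ⟨x, hx, rfl⟩; exact hall x hx)
    exact hc.2 (hcv.antisymm (desc_of_mem_children hc))
  obtain ⟨c', hc', hbc'⟩ := exists_mem_children_mem_leafSet hv (hmem b hb)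
  exact ⟨a, ha, b, hb, c, hc, c', hc', fun h => hbc (h ▸ hbc'), hac, hbc'⟩

end XTree

section Blocks

variable {α : Type} {G : SimpleGraph α}

theorem connected_induce_of_isChain :
    ∀ {l : List α}, l ≠ [] → l.IsChain G.Adj → (G.induce {x | x ∈ l}).Connected
  | [x], _, _ => by
    rw [show {z | z ∈ [x]} = ({x} : Set α) by ext; simp]
    simp
  | x :: y :: l, _, h => by
    have hset : {z | z ∈ x :: y :: l} = {x} ∪ {z | z ∈ y :: l} := by
      ext; simp
    rw [List.isChain_cons_cons] at h
    rw [hset]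
    exact SimpleGraph.connected_induce_union (by simp [SimpleGraph.Preconnected.of_subsingleton])
      (connected_induce_of_isChain (List.cons_ne_nil y l) h.2).preconnected rfl
      List.mem_cons_self h.1

theorem exists_isChain_of_connected_induce {S : Set α} (h : (G.induce S).Connected) {a b : α}
    (ha : a ∈ S) (hb : b ∈ S) :
    ∃ l : List α, l.Nodup ∧ l.IsChain G.Adj ∧ l.head? = some a ∧ l.getLast? = some b ∧
      ∀ x ∈ l, x ∈ S := by
  obtain ⟨w⟩ := h.preconnected ⟨a, ha⟩ ⟨b, hb⟩
  let q := w.map (SimpleGraph.Embedding.induce S).toHom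
  refine ⟨q.bypass.support, q.bypass_isPath.support_nodup, q.bypass.isChain_adj_support,
    by rw [← SimpleGraph.Walk.cons_tail_support]; rfl, ?_, fun x hx => ?_⟩
  · rw [List.getLast?_eq_some_getLast (SimpleGraph.Walk.support_ne_nil _),
      SimpleGraph.Walk.getLast_support]
    rfl
  · obtain ⟨y, -, rfl⟩ := List.mem_map.mp (SimpleGraph.Walk.support_map _ w ▸
      q.support_bypass_subset_support hx)
    exact y.2

theorem connected_induce_of_isClique {B : Set α} (h : G.IsClique B) (hne : B.Nonempty) :
    (G.induce B).Connected := by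
  have := hne.to_subtype
  rw [SimpleGraph.induce_eq_top.mpr h]
  exact SimpleGraph.connected_top

theorem GoodSet.of_isClique {B : Set α} (h : G.IsClique B) (hne : B.Nonempty) : GoodSet G B :=
  ⟨hne, connected_induce_of_isClique h hne,
    fun _ _ hne' => connected_induce_of_isClique (h.subset Set.sdiff_subset) hne'⟩

theorem goodSet_of_cycle {l : List α} {a b : α} (hnd : l.Nodup) (hch : l.IsChain G.Adj)
    (ha : l.head? = some a) (hb : l.getLast? = some b) (hba : G.Adj b a) :
    GoodSet G {x | x ∈ l} := by
  have hl : l ≠ [] := by rintro rfl; simp at ha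
  refine ⟨⟨a, List.mem_of_mem_head? ha⟩, connected_induce_of_isChain hl hch, fun v hv hne => ?_⟩
  obtain ⟨l₁, l₂, rfl⟩ := List.append_of_mem hv
  -- deleting `v` from the cycle `l₁ ++ v :: l₂` leaves the path `l₂ ++ l₁`
  have hrest : {x | x ∈ l₁ ++ v :: l₂} \ {v} = {x | x ∈ l₂ ++ l₁} := by
    simp only [List.nodup_append, List.nodup_cons] at hnd
    ext x
    simp only [Set.mem_sdiff, Set.mem_ofPred_eq, Set.mem_singleton_iff, List.mem_append,
      List.mem_cons]
    grind
  rw [hrest] at hne ⊢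
  refine connected_induce_of_isChain (fun h => by simp [h] at hne) ?_
  rw [List.isChain_append] at hch ⊢
  refine ⟨hch.2.1.tail, hch.1, fun x hx y hy => ?_⟩
  have hxb : x = b := by
    rw [List.getLast?_append, List.getLast?_cons, Option.mem_def.mp hx] at hb
    simpa using hb
  have hya : y = a := by
    rw [List.head?_append, Option.mem_def.mp hy] at ha
    simpa using ha
  exact hxb ▸ hya ▸ hba

theorem exists_isBlock_superset [Finite α] {C : Set α} (h : GoodSet G C) :
    ∃ B, IsBlock G B ∧ C ⊆ B := by
  obtain ⟨B, hB, hmax⟩ := Set.Finite.exists_maximalFor id {D | GoodSet G D ∧ C ⊆ D}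
    (Set.toFinite _) ⟨C, h, subset_rfl⟩
  exact ⟨B, ⟨hB.1, fun D hD hBD => hBD.antisymm (hmax ⟨hD, hB.2.trans hBD⟩ hBD)⟩, hB.2⟩

theorem IsBlockGraph.adj_of_goodSet [Finite α] (hG : IsBlockGraph G) {C : Set α}
    (hC : GoodSet G C) {x y : α} (hx : x ∈ C) (hy : y ∈ C) (hxy : x ≠ y) : G.Adj x y :=
  let ⟨B, hB, hCB⟩ := exists_isBlock_superset hC
  hG B hB (hCB hx) (hCB hy) hxy

theorem IsBlock.nontrivial {B : Set α} (hB : IsBlock G B) (h : ∀ x, ∃ y, G.Adj x y) :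
    B.Nontrivial := by
  obtain ⟨a, ha⟩ := hB.1.1
  obtain ⟨y, hy⟩ := h a
  by_contra hB₁
  rw [Set.not_nontrivial_iff] at hB₁
  have hpair : B = {a, y} :=
    hB.2 _ (GoodSet.of_isClique (SimpleGraph.isClique_pair.mpr fun _ => hy) ⟨a, by simp⟩)
      fun z hz => hB₁ ha hz ▸ by simp
  exact hy.ne (hB₁ ha (hpair ▸ by simp : y ∈ B))

end Blocks

theorem cordGraph_exists_adj {X : Type} {L : Set (Set X)} (hc : ∀ c ∈ L, IsCord c)
    (hcov : ∀ x : X, ∃ c ∈ L, x ∈ c) (x : X) : ∃ y, (cordGraph L).Adj x y := by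
  obtain ⟨c, hcL, hxc⟩ := hcov x
  obtain ⟨a, b, hab, rfl⟩ := hc c hcL
  rcases hxc with rfl | rfl
  · exact ⟨b, hab, hcL⟩
  · exact ⟨a, hab.symm, Set.pair_comm x a ▸ hcL⟩

namespace XTree

variable {X V : Type} {T : XTree X V} {L : Set (Set X)}

theorem IsTopoLasso.connected_induce_leafSet [Finite V] (h : T.IsTopoLasso L) (v : V) :
    ((cordGraph L).induce (T.leafSet v)).Connected := by
  induction v using T.induction_children with
  | h v ih =>
    by_cases hv : T.IsLeaf v
    · obtain ⟨x, rfl⟩ := hv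
      rw [leafSet_leaf]
      simp
    obtain ⟨c₀, hc₀⟩ := exists_mem_children hv
    obtain ⟨u, hu⟩ := (ih c₀ hc₀).nonempty
    have hpatch : ∀ c ∈ T.children v,
        ((cordGraph L).induce (T.leafSet c₀ ∪ T.leafSet c)).Connected := by
      intro c hc
      by_cases hcc₀ : c₀ = c
      · rw [← hcc₀, Set.union_self]
        exact ih c₀ hc₀
      obtain ⟨p, q, hp, hq, hpq⟩ := h v c₀ c hc₀ hc hcc₀
      exact SimpleGraph.connected_induce_union (ih c₀ hc₀).preconnected (ih c hc).preconnected
        hp hq ⟨ne_of_mem_leafSet hc₀ hc hcc₀ hp hq, hpq⟩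
    refine SimpleGraph.induce_connected_of_patches u (leafSet_subset_of_mem_children hc₀ hu)
      fun {w} hw => ?_
    obtain ⟨c, hc, hwc⟩ := exists_mem_children_mem_leafSet hv hw
    exact ⟨_, Set.union_subset (leafSet_subset_of_mem_children hc₀)
      (leafSet_subset_of_mem_children hc), Or.inl hu, Or.inr hwc,
      (hpatch c hc).preconnected _ _⟩

theorem IsMinTopoLasso.cord_unique (hmin : T.IsMinTopoLasso L) {v c₁ c₂ : V}
    (hc₁ : c₁ ∈ T.children v) (hc₂ : c₂ ∈ T.children v) (hne : c₁ ≠ c₂) {a a' b b' : X}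
    (ha : a ∈ T.leafSet c₁) (ha' : a' ∈ T.leafSet c₁) (hb : b ∈ T.leafSet c₂)
    (hb' : b' ∈ T.leafSet c₂) (hab : ({a, b} : Set X) ∈ L) (hab' : ({a', b'} : Set X) ∈ L) :
    a = a' ∧ b = b' := by
  have hsep : T.Separates v a' b' := ⟨c₁, hc₁, c₂, hc₂, hne, ha', hb'⟩
  suffices hcord : ({a, b} : Set X) = {a', b'} by
    rcases Set.pair_eq_pair_iff.mp hcord with h | ⟨rfl, rfl⟩
    · exact h
    · exact absurd rfl (ne_of_mem_leafSet hc₁ hc₂ hne ha hb')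
  by_contra hcord
  -- `{a', b'}` is redundant: `{a, b}` serves the only pair of sibling subtrees it joins
  have hlasso : T.IsTopoLasso (L \ {{a', b'}}) := by
    intro w d₁ d₂ hd₁ hd₂ hd
    obtain ⟨p, q, hp, hq, hpq⟩ := hmin.1 w d₁ d₂ hd₁ hd₂ hd
    by_cases hpq' : ({p, q} : Set X) = {a', b'}
    swap
    · exact ⟨p, q, hp, hq, hpq, hpq'⟩
    have hw : T.Separates w p q := ⟨d₁, hd₁, d₂, hd₂, hd, hp, hq⟩
    rcases Set.pair_eq_pair_iff.mp hpq' with ⟨rfl, rfl⟩ | ⟨rfl, rfl⟩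
    · obtain rfl := hw.unique hsep
      obtain rfl := eq_of_mem_children_of_desc hd₁ hc₁ hp ha'
      obtain rfl := eq_of_mem_children_of_desc hd₂ hc₂ hq hb'
      exact ⟨a, b, ha, hb, hab, hcord⟩
    · obtain rfl := hw.unique hsep.symm
      obtain rfl := eq_of_mem_children_of_desc hd₁ hc₂ hp hb'
      obtain rfl := eq_of_mem_children_of_desc hd₂ hc₁ hq ha'
      exact ⟨b, a, hb, ha, Set.pair_comm a b ▸ hab, Set.pair_comm a b ▸ hcord⟩
  have hL := hmin.2 _ Set.sdiff_subset hlasso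
  exact (hL ▸ hab' : _ ∈ L \ _).2 rfl

theorem IsMinTopoLasso.mem_leafSet_of_separates (hmin : T.IsMinTopoLasso L) {v : V}
    {a b x : X} (hsep : T.Separates v a b) (hxa : ({x, a} : Set X) ∈ L)
    (hxb : ({x, b} : Set X) ∈ L) : x ∈ T.leafSet v := by
  by_contra hx
  obtain ⟨u, d₁, hd₁, d₂, hd₂, hd, hxd₁, had₂⟩ :=
    T.exists_separates fun h : x = a => hx (h ▸ hsep.mem_leafSet)
  have hxu : x ∈ T.leafSet u := leafSet_subset_of_mem_children hd₁ hxd₁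
  have huv : T.Desc u v := (((desc_of_mem_children hd₂).trans had₂).total
    hsep.mem_leafSet).resolve_right fun hvu => hx (leafSet_anti hvu hxu)
  obtain ⟨c, hc, hcv⟩ := exists_mem_children_desc huv fun h => hx (h ▸ hxu)
  obtain rfl : d₂ = c :=
    eq_of_mem_children_of_desc hd₂ hc had₂ (leafSet_anti hcv hsep.mem_leafSet)
  exact hsep.ne (hmin.cord_unique hd₁ hd₂ hd hxd₁ hxd₁ had₂
    (leafSet_anti hcv hsep.symm.mem_leafSet) hxa hxb).2

/-- The paper's block `B_v`. -/
def cordEndsAt (T : XTree X V) (L : Set (Set X)) (v : V) : Set X :=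
  {a | ∃ b, T.Separates v a b ∧ ({a, b} : Set X) ∈ L}

variable [Finite X] [Finite V]

/-- If `a ≠ a'`, the two cords close a cycle in `Γ(L)` through a cord joining the subtrees of
`c₂` and `c₃`; the block containing that cycle is a clique and so supplies a second cord `{a', b}`
between the subtrees of `c` and `c₂`. -/
theorem IsMinTopoLasso.cord_end_unique (hmin : T.IsMinTopoLasso L)
    (hbg : IsBlockGraph (cordGraph L)) {v c c₂ c₃ : V} (hc : c ∈ T.children v)
    (hc₂ : c₂ ∈ T.children v) (hc₃ : c₃ ∈ T.children v) (h₂ : c ≠ c₂) (h₃ : c ≠ c₃)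
    {a a' b b' : X} (ha : a ∈ T.leafSet c) (ha' : a' ∈ T.leafSet c) (hb : b ∈ T.leafSet c₂)
    (hb' : b' ∈ T.leafSet c₃) (hab : ({a, b} : Set X) ∈ L) (hab' : ({a', b'} : Set X) ∈ L) :
    a = a' := by
  by_cases h₂₃ : c₂ = c₃
  · subst h₂₃
    exact (hmin.cord_unique hc hc₂ h₂ ha ha' hb hb' hab hab').1
  obtain ⟨x₂, x₃, hx₂, hx₃, hx⟩ := hmin.1 v c₂ c₃ hc₂ hc₃ h₂₃
  have hconn : ((cordGraph L).induce (T.leafSet c₂ ∪ T.leafSet c₃)).Connected :=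
    SimpleGraph.connected_induce_union (hmin.1.connected_induce_leafSet c₂).preconnected
      (hmin.1.connected_induce_leafSet c₃).preconnected hx₂ hx₃
      ⟨ne_of_mem_leafSet hc₂ hc₃ h₂₃ hx₂ hx₃, hx⟩
  obtain ⟨p, hpnd, hpch, hphd, hplast, hpS⟩ :=
    exists_isChain_of_connected_induce hconn (Or.inl hb) (Or.inr hb')
  obtain ⟨q, hqnd, hqch, hqhd, hqlast, hqS⟩ :=
    exists_isChain_of_connected_induce (hmin.1.connected_induce_leafSet c) ha' ha
  have hdisj : p.Disjoint q := fun x hxp hxq => by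
    rcases hpS x hxp with hx | hx
    exacts [ne_of_mem_leafSet hc hc₂ h₂ (hqS x hxq) hx rfl,
      ne_of_mem_leafSet hc hc₃ h₃ (hqS x hxq) hx rfl]
  have hcycle : GoodSet (cordGraph L) {x | x ∈ p ++ q} := by
    refine goodSet_of_cycle (hpnd.append hqnd hdisj) (List.isChain_append.mpr
      ⟨hpch, hqch, ?_⟩) (by simp [List.head?_append, hphd]) (by simp [hqlast])
      ⟨ne_of_mem_leafSet hc hc₂ h₂ ha hb, hab⟩
    simp only [hplast, hqhd, Option.mem_def, Option.some.injEq, forall_eq']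
    exact ⟨(ne_of_mem_leafSet hc hc₃ h₃ ha' hb').symm, Set.pair_comm a' b' ▸ hab'⟩
  have hadj := hbg.adj_of_goodSet hcycle
    (List.mem_append_right p (List.mem_of_mem_head? hqhd))
    (List.mem_append_left q (List.mem_of_mem_head? hphd)) (ne_of_mem_leafSet hc hc₂ h₂ ha' hb)
  exact (hmin.cord_unique hc hc₂ h₂ ha ha' hb hb hab hadj.2).1

theorem IsMinTopoLasso.isClique_cordEndsAt (hmin : T.IsMinTopoLasso L)
    (hbg : IsBlockGraph (cordGraph L)) (v : V) : (cordGraph L).IsClique (T.cordEndsAt L v) := by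
  rintro x ⟨x', ⟨cx, hcx, cx', hcx', hx, hxcx, hx'⟩, hxx'⟩
    y ⟨y', ⟨cy, hcy, cy', hcy', hy, hycy, hy'⟩, hyy'⟩ hxy
  have hcxy : cx ≠ cy := by
    rintro rfl
    exact hxy (hmin.cord_end_unique hbg hcx hcx' hcy' hx hy hxcx hycy hx' hy' hxx' hyy')
  obtain ⟨p, q, hp, hq, hpq⟩ := hmin.1 v cx cy hcx hcy hcxy
  obtain rfl := hmin.cord_end_unique hbg hcx hcx' hcy hx hcxy hxcx hp hx' hq hxx' hpq
  obtain rfl := hmin.cord_end_unique hbg hcy hcy' hcx hy hcxy.symm hycy hq hy' hp hyy'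
    (Set.pair_comm x q ▸ hpq)
  exact ⟨hxy, hpq⟩

end XTree

section BlockLCA

variable {X V : Type} {T : XTree X V} {L : Set (Set X)} {B : Set X} {v : V} {a b : X}

theorem IsBlock.subset_leafSet (hmin : T.IsMinTopoLasso L) (hbg : IsBlockGraph (cordGraph L))
    (hB : IsBlock (cordGraph L) B) (hsep : T.Separates v a b) (ha : a ∈ B) (hb : b ∈ B) :
    B ⊆ T.leafSet v := by
  intro x hx
  by_cases hxa : x = a
  · exact hxa ▸ hsep.mem_leafSet
  by_cases hxb : x = b
  · exact hxb ▸ hsep.symm.mem_leafSet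
  exact hmin.mem_leafSet_of_separates hsep (hbg B hB hx ha hxa).2 (hbg B hB hx hb hxb).2

theorem IsBlock.isLCA (hmin : T.IsMinTopoLasso L) (hbg : IsBlockGraph (cordGraph L))
    (hB : IsBlock (cordGraph L) B) (hsep : T.Separates v a b) (ha : a ∈ B) (hb : b ∈ B) :
    T.IsLCA v (T.leaf '' B) :=
  hsep.isLCA ha hb (hB.subset_leafSet hmin hbg hsep ha hb)

theorem IsBlock.eq_cordEndsAt [Finite X] [Finite V] (hmin : T.IsMinTopoLasso L)
    (hbg : IsBlockGraph (cordGraph L)) (hB : IsBlock (cordGraph L) B)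
    (hsep : T.Separates v a b) (ha : a ∈ B) (hb : b ∈ B) : B = T.cordEndsAt L v := by
  refine hB.2 _ (GoodSet.of_isClique (hmin.isClique_cordEndsAt hbg v)
    ⟨a, b, hsep, (hbg B hB ha hb hsep.ne).2⟩) fun x hx => ?_
  rcases hsep.left_or_right (hB.subset_leafSet hmin hbg hsep ha hb hx) with h | h
  · exact ⟨a, h, (hbg B hB hx ha h.ne).2⟩
  · exact ⟨b, h, (hbg B hB hx hb h.ne).2⟩

end BlockLCA

theorem stmt12_general {X V : Type} [Fintype X] [Fintype V] (T : XTree X V)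
    (hph : T.IsPhylo)
    (L : Set (Set X)) (hc : ∀ c ∈ L, IsCord c) (hcov : ∀ x : X, ∃ c ∈ L, x ∈ c)
    (hmin : T.IsMinTopoLasso L) (hbg : IsBlockGraph (cordGraph L)) :
    (∀ v : V, T.Interior v →
        ∃! B : Set X, IsBlock (cordGraph L) B ∧ T.IsLCA v (T.leaf '' B)) ∧
      ∀ B : Set X, IsBlock (cordGraph L) B →
        ∃! v : V, T.Interior v ∧ T.IsLCA v (T.leaf '' B) := by
  refine ⟨fun v hv => ?_, fun B hB => ?_⟩
  · obtain ⟨c, hc, c', hc', hne⟩ := hph.exists_ne_mem_children hv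
    obtain ⟨a, b, ha, hb, hab⟩ := hmin.1 v c c' hc hc' hne
    have hsep : T.Separates v a b := ⟨c, hc, c', hc', hne, ha, hb⟩
    obtain ⟨B, hB, hsub⟩ := exists_isBlock_superset (G := cordGraph L)
      (GoodSet.of_isClique (SimpleGraph.isClique_pair.mpr fun _ => ⟨hsep.ne, hab⟩)
        (Set.insert_nonempty a {b}))
    have ha : a ∈ B := hsub (by simp)
    have hb : b ∈ B := hsub (by simp)
    refine ⟨B, ⟨hB, hB.isLCA hmin hbg hsep ha hb⟩, ?_⟩
    rintro B' ⟨hB', hlca⟩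
    obtain ⟨a', ha', b', hb', hsep'⟩ := hlca.exists_separates hv hB'.1.1
    rw [hB'.eq_cordEndsAt hmin hbg hsep' ha' hb', hB.eq_cordEndsAt hmin hbg hsep ha hb]
  · obtain ⟨a, ha, b, hb, hab⟩ := hB.nontrivial (cordGraph_exists_adj hc hcov)
    obtain ⟨v, hsep⟩ := T.exists_separates hab
    have hlca := hB.isLCA hmin hbg hsep ha hb
    exact ⟨v, ⟨hsep.interior, hlca⟩, fun v' hv' => hv'.2.unique hlca⟩

/-- for a minimal topological lasso `L` with `Γ(L)` a block graph, every
interior vertex `v` is the lca of a unique block of `Γ(L)`, and `v ↦ B_v` is a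
bijection between interior vertices and blocks, with inverse `B ↦ lca(V(B))`. -/
theorem stmt12 {X V : Type} [Fintype X] [Fintype V] (T : XTree X V)
    (hph : T.IsPhylo) (hX : 3 ≤ Fintype.card X)
    (L : Set (Set X)) (hc : ∀ c ∈ L, IsCord c) (hcov : ∀ x : X, ∃ c ∈ L, x ∈ c)
    (hmin : T.IsMinTopoLasso L) (hbg : IsBlockGraph (cordGraph L)) :
    (∀ v : V, T.Interior v →
        ∃! B : Set X, IsBlock (cordGraph L) B ∧ T.IsLCA v (T.leaf '' B)) ∧
      ∀ B : Set X, IsBlock (cordGraph L) B →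
        ∃! v : V, T.Interior v ∧ T.IsLCA v (T.leaf '' B) :=
  stmt12_general T hph L hc hcov hmin hbg
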